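/- For all nonnegative integers m and n and all real x, y, the bivariate r-Bell polynomials satisfy φ_{m+n,r}(x,y) = Σ_{i=0}^{n} Σ_{k=0}^{m} C(n,i) · (x)_k · y^k · φ_i(x−k, y) · {m+r brace k+r}_r · (r+k)^{n−i}, where φ_i denotes the bivariate Bell polynomial and {m+r brace k+r}_r the r-Stirling number of the second kind. -/
import Mathlib


open Finset

noncomputable section

/-- The falling factorial `(x)_k = x (x-1) ⋯ (x-k+1)`. -/
def fallFac (x : ℝ) (k : ℕ) : ℝ := ∏ i ∈ Finset.range k, (x - (i : ℝ))

/-- The Stirling numbers of the second kind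
`{n brace k} = (1/k!) ∑_{i=0}^{k} C(k,i) (−1)^{k−i} i^n`. -/
def stirling2 (n k : ℕ) : ℝ :=
  ((k.factorial : ℝ))⁻¹ *
    ∑ i ∈ Finset.range (k + 1), (k.choose i : ℝ) * (-1) ^ (k - i) * (i : ℝ) ^ n

/-- The r-Stirling numbers of the second kind
`{n+r brace k+r}_r = (1/k!) ∑_{j=0}^{k} C(k,j) (−1)^{k−j} (j+r)^n`. -/
def rStirling2 (r n k : ℕ) : ℝ :=
  ((k.factorial : ℝ))⁻¹ *
    ∑ j ∈ Finset.range (k + 1), (k.choose j : ℝ) * (-1) ^ (k - j) * ((j : ℝ) + r) ^ n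

/-- The bivariate Bell polynomials `φ_n(x,y) = ∑_{k=0}^{n} {n brace k} (x)_k y^k`. -/
def phiBiv (n : ℕ) (x y : ℝ) : ℝ :=
  ∑ k ∈ Finset.range (n + 1), stirling2 n k * fallFac x k * y ^ k

/-- The bivariate r-Bell polynomials `φ_{n,r}(x,y) = ∑_{k=0}^{n} {n+r brace k+r}_r (x)_k y^k`. -/
def phiRBiv (r n : ℕ) (x y : ℝ) : ℝ :=
  ∑ k ∈ Finset.range (n + 1), rStirling2 r n k * fallFac x k * y ^ k

lemma rS_zero (r n : ℕ) : rStirling2 r n 0 = (r : ℝ) ^ n := by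
  simp [rStirling2]

lemma rS_rec (r n l : ℕ) :
    rStirling2 r (n + 1) (l + 1) =
      rStirling2 r n l + (((l : ℝ) + 1) + r) * rStirling2 r n (l + 1) := by
  have key : ∑ b ∈ range (l + 2), ((l+1).choose b : ℝ) * (-1) ^ (l + 1 - b) * ((b : ℝ) + r) ^ (n+1)
      = (((l : ℝ) + 1) + r) *
          ∑ b ∈ range (l + 2), ((l+1).choose b : ℝ) * (-1) ^ (l + 1 - b) * ((b : ℝ) + r) ^ n
        + ((l : ℝ) + 1) *
          ∑ b ∈ range (l + 1), (l.choose b : ℝ) * (-1) ^ (l - b) * ((b : ℝ) + r) ^ n := by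
    have expand : ∀ b ∈ range (l + 2),
        ((l+1).choose b : ℝ) * (-1) ^ (l + 1 - b) * ((b : ℝ) + r) ^ (n+1)
          = (((l : ℝ) + 1) + r) * (((l+1).choose b : ℝ) * (-1) ^ (l + 1 - b) * ((b : ℝ) + r) ^ n)
            - ((l + 1 - b : ℕ) : ℝ) * (((l+1).choose b : ℝ) * (-1) ^ (l + 1 - b) * ((b : ℝ) + r) ^ n) := by
      intro b hb
      have hb' : b ≤ l + 1 := by simpa [Nat.lt_succ_iff] using hb
      have : ((l + 1 - b : ℕ) : ℝ) = ((l : ℝ) + 1) - b := by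
        push_cast [Nat.cast_sub hb']; ring
      rw [this, pow_succ]; ring
    rw [Finset.sum_congr rfl expand, Finset.sum_sub_distrib]
    have second : ∑ b ∈ range (l + 2),
        ((l + 1 - b : ℕ) : ℝ) * (((l+1).choose b : ℝ) * (-1) ^ (l + 1 - b) * ((b : ℝ) + r) ^ n)
        = - (((l : ℝ) + 1) * ∑ b ∈ range (l + 1), (l.choose b : ℝ) * (-1) ^ (l - b) * ((b : ℝ) + r) ^ n) := by
      rw [Finset.sum_range_succ]
      simp only [Nat.sub_self, Nat.cast_zero, zero_mul, add_zero]
      rw [Finset.mul_sum, ← Finset.sum_neg_distrib]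
      refine Finset.sum_congr rfl fun b hb => ?_
      have hb' : b ≤ l := by simpa [Nat.lt_succ_iff] using hb
      have h1 : ((l + 1 - b : ℕ) : ℝ) * ((l+1).choose b : ℝ) = ((l : ℝ) + 1) * (l.choose b : ℝ) := by
        have := Nat.choose_mul_succ_eq l b
        have := congrArg (fun t : ℕ => (t : ℝ)) this.symm
        push_cast at this
        linarith [this]
      have h2 : ((-1 : ℝ)) ^ (l + 1 - b) = -(-1) ^ (l - b) := by
        rw [show l + 1 - b = (l - b) + 1 by omega, pow_succ]; ring
      calc ((l + 1 - b : ℕ) : ℝ) * (((l+1).choose b : ℝ) * (-1) ^ (l + 1 - b) * ((b : ℝ) + r) ^ n)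
          = (((l + 1 - b : ℕ) : ℝ) * ((l+1).choose b : ℝ)) * ((-1) ^ (l + 1 - b) * ((b : ℝ) + r) ^ n) := by ring
        _ = (((l : ℝ) + 1) * (l.choose b : ℝ)) * ((-(-1) ^ (l - b)) * ((b : ℝ) + r) ^ n) := by rw [h1, h2]
        _ = -(((l : ℝ) + 1) * ((l.choose b : ℝ) * (-1) ^ (l - b) * ((b : ℝ) + r) ^ n)) := by ring
    rw [second, ← Finset.mul_sum]; ring
  have hf1 : ((l+1).factorial : ℝ) ≠ 0 := Nat.cast_ne_zero.mpr (Nat.factorial_ne_zero _)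
  have hf0 : ((l).factorial : ℝ) ≠ 0 := Nat.cast_ne_zero.mpr (Nat.factorial_ne_zero _)
  have hfs : ((l+1).factorial : ℝ) = ((l:ℝ)+1) * (l.factorial : ℝ) := by
    rw [Nat.factorial_succ]; push_cast; ring
  unfold rStirling2
  rw [key, hfs]
  set S1 := ∑ b ∈ range (l + 2), ((l+1).choose b : ℝ) * (-1) ^ (l + 1 - b) * ((b : ℝ) + r) ^ n with hS1
  set S2 := ∑ b ∈ range (l + 1), (l.choose b : ℝ) * (-1) ^ (l - b) * ((b : ℝ) + r) ^ n with hS2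
  field_simp
  ring

lemma rS_eq_zero (r : ℕ) : ∀ n l : ℕ, n < l → rStirling2 r n l = 0 := by
  intro n
  induction n with
  | zero =>
    intro l hl
    unfold rStirling2
    have h := add_pow (1 : ℝ) (-1) l
    rw [show (1:ℝ) + (-1) = 0 by ring, zero_pow (by omega : l ≠ 0)] at h
    have : ∑ j ∈ range (l + 1), (l.choose j : ℝ) * (-1) ^ (l - j) * ((j : ℝ) + r) ^ 0 = 0 := by
      rw [h]
      refine Finset.sum_congr rfl fun j hj => ?_
      rw [pow_zero]; ring
    rw [this, mul_zero]
  | succ n ih =>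
    intro l hl
    obtain ⟨l', rfl⟩ : ∃ l', l = l' + 1 := ⟨l - 1, by omega⟩
    rw [rS_rec, ih l' (by omega), ih (l'+1) (by omega)]
    ring

lemma stirling2_eq_rS (n k : ℕ) : stirling2 n k = rStirling2 0 n k := by
  simp [stirling2, rStirling2]

lemma fallFac_add (x : ℝ) (k l : ℕ) :
    fallFac x (k + l) = fallFac x k * fallFac (x - k) l := by
  unfold fallFac
  rw [Finset.prod_range_add]
  congr 1
  refine Finset.prod_congr rfl fun i _ => ?_
  push_cast; ring

lemma lemA (a n l : ℕ) :
    ∑ i ∈ range (n + 1), (n.choose i : ℝ) * (a : ℝ) ^ (n - i) * stirling2 i l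
      = rStirling2 a n l := by
  unfold stirling2 rStirling2
  have : ∑ i ∈ range (n + 1), (n.choose i : ℝ) * (a : ℝ) ^ (n - i) *
        ((l.factorial : ℝ)⁻¹ * ∑ s ∈ range (l + 1), (l.choose s : ℝ) * (-1) ^ (l - s) * (s : ℝ) ^ i)
      = (l.factorial : ℝ)⁻¹ * ∑ i ∈ range (n + 1), ∑ s ∈ range (l + 1),
          (l.choose s : ℝ) * (-1) ^ (l - s) * ((s : ℝ) ^ i * (a : ℝ) ^ (n - i) * (n.choose i : ℝ)) := by
    simp only [Finset.mul_sum]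
    refine Finset.sum_congr rfl fun i _ => ?_
    refine Finset.sum_congr rfl fun s _ => ?_
    ring
  rw [this, Finset.sum_comm]
  congr 1
  refine Finset.sum_congr rfl fun s _ => ?_
  rw [← Finset.mul_sum, ← add_pow]

lemma lemC (r m : ℕ) : ∀ (n j : ℕ),
    ∑ k ∈ range (j + 1), rStirling2 r m k * rStirling2 (r + k) n (j - k)
      = rStirling2 r (m + n) j := by
  intro n
  induction n with
  | zero =>
    intro j
    rw [Finset.sum_range_succ, Nat.sub_self]
    have h0 : rStirling2 (r + j) 0 0 = 1 := by simp [rS_zero]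
    have hz : ∀ k ∈ range j, rStirling2 r m k * rStirling2 (r + k) 0 (j - k) = 0 := by
      intro k hk
      rw [rS_eq_zero _ 0 (j - k) (by simp only [Finset.mem_range] at hk; omega), mul_zero]
    rw [Finset.sum_eq_zero hz, h0, zero_add, mul_one, Nat.add_zero]
  | succ n ih =>
    intro j
    cases j with
    | zero =>
      simp [rS_zero, pow_add]
    | succ j' =>
      rw [Finset.sum_range_succ]
      have last : rStirling2 r m (j'+1) * rStirling2 (r + (j'+1)) (n+1) (j'+1 - (j'+1))
          = (((j':ℝ)+1) + r) * (rStirling2 r m (j'+1) * rStirling2 (r + (j'+1)) n 0) := by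
        rw [Nat.sub_self, rS_zero, rS_zero]; push_cast; ring
      have step : ∀ k ∈ range (j'+1),
          rStirling2 r m k * rStirling2 (r + k) (n+1) (j'+1-k)
            = rStirling2 r m k * rStirling2 (r + k) n (j' - k)
              + (((j':ℝ)+1) + r) * (rStirling2 r m k * rStirling2 (r + k) n (j'+1-k)) := by
        intro k hk
        have hk' : k ≤ j' := by simp only [Finset.mem_range] at hk; omega
        have e1 : j' + 1 - k = (j' - k) + 1 := by omega
        rw [e1, rS_rec]
        have e2 : ((j' - k : ℕ) : ℝ) + 1 + ((r + k : ℕ) : ℝ) = ((j':ℝ)+1) + r := by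
          push_cast [Nat.cast_sub hk']; ring
        rw [e2]
        ring
      rw [Finset.sum_congr rfl step, Finset.sum_add_distrib, ← Finset.mul_sum, ih j', last]
      have comb : rStirling2 r (m+n) j'
            + (((j':ℝ)+1)+r) * (∑ k ∈ range (j'+1), rStirling2 r m k * rStirling2 (r+k) n (j'+1-k))
            + (((j':ℝ)+1)+r) * (rStirling2 r m (j'+1) * rStirling2 (r+(j'+1)) n 0)
          = rStirling2 r (m+n) j'
            + (((j':ℝ)+1)+r) * (∑ k ∈ range (j'+2), rStirling2 r m k * rStirling2 (r+k) n (j'+1-k)) := by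
        rw [Finset.sum_range_succ (n := j'+1), Nat.sub_self]; ring
      rw [comb, ih (j'+1), show m + (n+1) = (m+n)+1 from rfl, rS_rec]

lemma stirling2_eq_zero {i l : ℕ} (h : i < l) : stirling2 i l = 0 := by
  rw [stirling2_eq_rS]; exact rS_eq_zero 0 i l h

lemma phiBiv_ext (i n : ℕ) (h : i ≤ n) (x y : ℝ) :
    phiBiv i x y = ∑ l ∈ range (n + 1), stirling2 i l * fallFac x l * y ^ l := by
  unfold phiBiv
  apply Finset.sum_subset (Finset.range_subset_range.mpr (by omega))
  intro l hl1 hl2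
  have : i < l := by simp only [Finset.mem_range] at hl1 hl2; omega
  rw [stirling2_eq_zero this, zero_mul, zero_mul]

theorem bivRBell_recurrence_via_Bell (r : ℕ) (hr : 0 < r) (m n : ℕ) (x y : ℝ) :
    phiRBiv r (m + n) x y =
      ∑ i ∈ Finset.range (n + 1), ∑ k ∈ Finset.range (m + 1),
        (n.choose i : ℝ) * fallFac x k * y ^ k * phiBiv i (x - (k : ℝ)) y *
          rStirling2 r m k * ((r : ℝ) + k) ^ (n - i) := by
  have hrhs :
      (∑ i ∈ Finset.range (n + 1), ∑ k ∈ Finset.range (m + 1),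
        (n.choose i : ℝ) * fallFac x k * y ^ k * phiBiv i (x - (k : ℝ)) y *
          rStirling2 r m k * ((r : ℝ) + k) ^ (n - i))
      = ∑ k ∈ range (m + 1), ∑ l ∈ range (n + 1),
          rStirling2 r m k * rStirling2 (r + k) n l * fallFac x (k + l) * y ^ (k + l) := by
    rw [Finset.sum_comm]
    refine Finset.sum_congr rfl fun k _ => ?_
    have hcast : ((r + k : ℕ) : ℝ) = (r : ℝ) + k := by push_cast; ring
    calc ∑ i ∈ range (n + 1),
          (n.choose i : ℝ) * fallFac x k * y ^ k * phiBiv i (x - (k : ℝ)) y *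
            rStirling2 r m k * ((r : ℝ) + k) ^ (n - i)
        = ∑ i ∈ range (n + 1), ∑ l ∈ range (n + 1),
            ((n.choose i : ℝ) * ((r + k : ℕ) : ℝ) ^ (n - i) * stirling2 i l) *
              (rStirling2 r m k * (fallFac x k * fallFac (x - (k : ℝ)) l) * (y ^ k * y ^ l)) := by
          refine Finset.sum_congr rfl fun i hi => ?_
          rw [phiBiv_ext i n (by simp only [Finset.mem_range] at hi; omega) (x - (k : ℝ)) y, hcast]
          simp only [Finset.mul_sum, Finset.sum_mul]
          refine Finset.sum_congr rfl fun l _ => ?_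
          ring
      _ = ∑ l ∈ range (n + 1),
            (∑ i ∈ range (n + 1), (n.choose i : ℝ) * ((r + k : ℕ) : ℝ) ^ (n - i) * stirling2 i l) *
              (rStirling2 r m k * (fallFac x k * fallFac (x - (k : ℝ)) l) * (y ^ k * y ^ l)) := by
          rw [Finset.sum_comm]
          refine Finset.sum_congr rfl fun l _ => ?_
          rw [Finset.sum_mul]
      _ = ∑ l ∈ range (n + 1),
            rStirling2 r m k * rStirling2 (r + k) n l * fallFac x (k + l) * y ^ (k + l) := by
          refine Finset.sum_congr rfl fun l _ => ?_
          rw [lemA, fallFac_add, pow_add]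
          ring
  rw [hrhs]
  have h1 : (∑ k ∈ range (m + 1), ∑ l ∈ range (n + 1),
        rStirling2 r m k * rStirling2 (r + k) n l * fallFac x (k + l) * y ^ (k + l))
      = ∑ k ∈ range (m + n + 1), ∑ l ∈ range (m + n + 1 - k),
          rStirling2 r m k * rStirling2 (r + k) n l * fallFac x (k + l) * y ^ (k + l) := by
    have inner : ∀ k ∈ range (m + 1),
        (∑ l ∈ range (n + 1), rStirling2 r m k * rStirling2 (r + k) n l * fallFac x (k + l) * y ^ (k + l))
        = ∑ l ∈ range (m + n + 1 - k), rStirling2 r m k * rStirling2 (r + k) n l * fallFac x (k + l) * y ^ (k + l) := by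
      intro k hk
      have hk' : k ≤ m := by simp only [Finset.mem_range] at hk; omega
      apply Finset.sum_subset (Finset.range_subset_range.mpr (by omega))
      intro l hl1 hl2
      have : n < l := by simp only [Finset.mem_range] at hl1 hl2; omega
      rw [rS_eq_zero (r + k) n l this, mul_zero, zero_mul, zero_mul]
    rw [Finset.sum_congr rfl inner]
    apply Finset.sum_subset (Finset.range_subset_range.mpr (by omega))
    intro k hk1 hk2
    have : m < k := by simp only [Finset.mem_range] at hk1 hk2; omega
    apply Finset.sum_eq_zero
    intro l _
    rw [rS_eq_zero r m k this, zero_mul, zero_mul, zero_mul]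
  rw [h1, ← Finset.sum_range_diag_flip (m + n + 1)
      (fun k l => rStirling2 r m k * rStirling2 (r + k) n l * fallFac x (k + l) * y ^ (k + l))]
  unfold phiRBiv
  refine Finset.sum_congr rfl fun j hj => ?_
  have per : ∀ k ∈ range (j + 1),
      rStirling2 r m k * rStirling2 (r + k) n (j - k) * fallFac x (k + (j - k)) * y ^ (k + (j - k))
        = rStirling2 r m k * rStirling2 (r + k) n (j - k) * (fallFac x j * y ^ j) := by
    intro k hk
    have : k + (j - k) = j := by simp only [Finset.mem_range] at hk; omega
    rw [this]; ring
  rw [Finset.sum_congr rfl per, ← Finset.sum_mul, lemC]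
  ring

end
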